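/- Every monotone (nondecreasing) quasi-isometry g : α → β between strings witnesses componentwise reducibility: there exist partitions α = u₁u₂⋯ and β = v₁v₂⋯ into finite nonempty blocks of uniformly bounded length such that every letter of uₙ occurs in vₙ for every n. -/

import Mathlib

/-!
Cut `α` into the level sets `[aₖ, aₖ₊₁)` of `g`. Since `g` is monotone and the lower
quasi-isometry bound forces `g x < g (x + W)` for `W = ⌈A (B + 1)⌉`, each of them has length at
most `W`. The `k`-th level set is sent to the single point `g aₖ`, which lies in the block
`[g aₖ, g aₖ₊₁)` of `β` (the first block also absorbs `[0, g 0)`), and by the upper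
quasi-isometry bound these blocks have length at most `g 0 + ⌈A W + B⌉`.
-/

def IsQI {Γ : Type*} (α β : ℕ → Γ) (f : ℕ → ℕ) (A B : ℝ) : Prop :=
  1 ≤ A ∧ 0 ≤ B ∧ (∀ n, α n = β (f n)) ∧
  (∀ x y : ℕ, (1 / A) * |(x : ℝ) - (y : ℝ)| - B ≤ |(f x : ℝ) - (f y : ℝ)| ∧
      |(f x : ℝ) - (f y : ℝ)| ≤ A * |(x : ℝ) - (y : ℝ)| + B) ∧
  (∀ m : ℕ, ∃ x : ℕ, |(m : ℝ) - (f x : ℝ)| ≤ A)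

/-- `α ≤_QI β`: there is a quasi-isometry from `α` to `β`. -/
def QI {Γ : Type*} (α β : ℕ → Γ) : Prop := ∃ f A B, IsQI α β f A B

def ComponentwiseReducible {Γ : Type*} (α β : ℕ → Γ) : Prop :=
  ∃ (C : ℕ) (ℓ m : ℕ → ℕ),
    (∀ k, 1 ≤ ℓ k ∧ ℓ k ≤ C) ∧ (∀ k, 1 ≤ m k ∧ m k ≤ C) ∧
    ∀ k p : ℕ, (Finset.range k).sum ℓ ≤ p → p < (Finset.range (k + 1)).sum ℓ →
      ∃ q : ℕ, (Finset.range k).sum m ≤ q ∧ q < (Finset.range (k + 1)).sum m ∧ α p = β q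

lemma sum_range_sub_of_lt_succ {a : ℕ → ℕ} (ha : ∀ k, a k < a (k + 1)) (ha0 : a 0 = 0)
    (k : ℕ) : (Finset.range k).sum (fun i => a (i + 1) - a i) = a k := by
  rw [Finset.sum_range_tsub (strictMono_nat_of_lt_succ ha).monotone, ha0, Nat.sub_zero]

lemma componentwiseReducible_of_cuts {Γ : Type*} (α β : ℕ → Γ) (a b : ℕ → ℕ) (C : ℕ)
    (ha : ∀ k, a k < a (k + 1)) (hb : ∀ k, b k < b (k + 1)) (ha0 : a 0 = 0) (hb0 : b 0 = 0)
    (haC : ∀ k, a (k + 1) ≤ a k + C) (hbC : ∀ k, b (k + 1) ≤ b k + C)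
    (hcol : ∀ k p, a k ≤ p → p < a (k + 1) → ∃ q, b k ≤ q ∧ q < b (k + 1) ∧ α p = β q) :
    ComponentwiseReducible α β := by
  refine ⟨C, fun k => a (k + 1) - a k, fun k => b (k + 1) - b k,
    fun k => ⟨?_, ?_⟩, fun k => ⟨?_, ?_⟩, ?_⟩
  · exact Nat.sub_pos_of_lt (ha k)
  · exact Nat.sub_le_iff_le_add'.2 (haC k)
  · exact Nat.sub_pos_of_lt (hb k)
  · exact Nat.sub_le_iff_le_add'.2 (hbC k)
  · simpa only [sum_range_sub_of_lt_succ ha ha0, sum_range_sub_of_lt_succ hb hb0] using hcol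

namespace IsQI

variable {Γ : Type*} {α β : ℕ → Γ} {g : ℕ → ℕ} {A B : ℝ}

lemma apply_le_add_ceil (h : IsQI α β g A B) {x y d : ℕ} (hxy : x ≤ y) (hyx : y ≤ x + d) :
    g y ≤ g x + ⌈A * d + B⌉₊ := by
  obtain ⟨hA, -, -, hdist, -⟩ := h
  have hdist_xy : |(y : ℝ) - x| ≤ d := by
    rw [abs_of_nonneg (by simp [hxy])]
    linarith [show (y : ℝ) ≤ x + d by exact_mod_cast hyx]
  have : (g y : ℝ) - g x ≤ ⌈A * d + B⌉₊ :=
    calc (g y : ℝ) - g x ≤ |(g y : ℝ) - g x| := le_abs_self _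
      _ ≤ A * |(y : ℝ) - x| + B := (hdist y x).2
      _ ≤ A * d + B := by gcongr
      _ ≤ ⌈A * d + B⌉₊ := Nat.le_ceil _
  have : (g y : ℝ) ≤ g x + ⌈A * d + B⌉₊ := by linarith
  exact_mod_cast this

lemma apply_lt_apply_add_ceil (h : IsQI α β g A B) (hg : Monotone g) (x : ℕ) :
    g x < g (x + ⌈A * (B + 1)⌉₊) := by
  obtain ⟨hA, -, -, hdist, -⟩ := h
  set W := ⌈A * (B + 1)⌉₊
  have hWA : B + 1 ≤ (1 / A) * W := by
    rw [one_div, le_inv_mul_iff₀ (by linarith)]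
    exact Nat.le_ceil _
  have hgap : 1 ≤ |(g (x + W) : ℝ) - g x| := by
    have := (hdist (x + W) x).1
    rw [Nat.cast_add, add_sub_cancel_left, Nat.abs_cast] at this
    linarith
  refine (hg (Nat.le_add_right x W)).lt_of_ne fun heq => ?_
  norm_num [heq] at hgap

end IsQI

section LevelStart

variable (g : ℕ → ℕ) (hex : ∀ x, ∃ d, g x < g (x + d))

/-- For monotone `g`, the point where the `k`-th level set of `g` begins. -/
def levelStart : ℕ → ℕ
  | 0 => 0
  | k + 1 => levelStart k + Nat.find (hex (levelStart k))

variable {g hex}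

lemma levelStart_lt_succ (k : ℕ) : levelStart g hex k < levelStart g hex (k + 1) :=
  Nat.lt_add_of_pos_right ((Nat.find_pos _).2 (by simp))

lemma apply_levelStart_lt_succ (k : ℕ) :
    g (levelStart g hex k) < g (levelStart g hex (k + 1)) :=
  Nat.find_spec (hex (levelStart g hex k))

lemma levelStart_succ_le {W : ℕ} (hW : ∀ x, g x < g (x + W)) (k : ℕ) :
    levelStart g hex (k + 1) ≤ levelStart g hex k + W :=
  Nat.add_le_add_left (Nat.find_min' (hex _) (hW _)) _

lemma apply_eq_apply_levelStart (hg : Monotone g) {k p : ℕ} (hkp : levelStart g hex k ≤ p)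
    (hpk : p < levelStart g hex (k + 1)) : g p = g (levelStart g hex k) := by
  obtain ⟨e, rfl⟩ := Nat.exists_eq_add_of_le hkp
  have he : e < Nat.find (hex (levelStart g hex k)) := by
    simp only [levelStart] at hpk
    omega
  exact le_antisymm (not_lt.1 (Nat.find_min (hex _) he)) (hg (Nat.le_add_right _ _))

end LevelStart

theorem monotone_QI_componentwise {Γ : Type*} (α β : ℕ → Γ) (g : ℕ → ℕ) (A B : ℝ)
    (h : IsQI α β g A B) (hmono : Monotone g) :
    ∃ (C : ℕ) (ℓ m : ℕ → ℕ),
      (∀ k, 1 ≤ ℓ k ∧ ℓ k ≤ C) ∧ (∀ k, 1 ≤ m k ∧ m k ≤ C) ∧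
      ∀ k p : ℕ, (Finset.range k).sum ℓ ≤ p → p < (Finset.range (k + 1)).sum ℓ →
        ∃ q : ℕ, (Finset.range k).sum m ≤ q ∧ q < (Finset.range (k + 1)).sum m ∧ α p = β q := by
  have hcol : ∀ n, α n = β (g n) := h.2.2.1
  set W := ⌈A * (B + 1)⌉₊
  have hW : ∀ x, g x < g (x + W) := h.apply_lt_apply_add_ceil hmono
  have hex : ∀ x, ∃ d, g x < g (x + d) := fun x => ⟨W, hW x⟩
  set a := levelStart g hex
  set b : ℕ → ℕ := fun k => if k = 0 then 0 else g (a k)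
  have hb_le : ∀ k, b k ≤ g (a k) := fun k => by by_cases hk : k = 0 <;> simp [b, hk]
  have hb_ge : ∀ k, g (a k) ≤ b k + g 0 := fun k => by
    by_cases hk : k = 0 <;> simp [b, hk, a, levelStart]
  have hb_succ : ∀ k, b (k + 1) = g (a (k + 1)) := fun k => if_neg k.succ_ne_zero
  refine componentwiseReducible_of_cuts α β a b (max W (g 0 + ⌈A * W + B⌉₊))
    levelStart_lt_succ (fun k => ?_) rfl rfl (fun k => ?_) (fun k => ?_) (fun k p hkp hpk => ?_)
  · exact (hb_le k).trans_lt (hb_succ k ▸ apply_levelStart_lt_succ k)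
  · exact (levelStart_succ_le hW k).trans (Nat.add_le_add_left (le_max_left _ _) _)
  · have hjump : g (a (k + 1)) ≤ g (a k) + ⌈A * W + B⌉₊ :=
      h.apply_le_add_ceil (levelStart_lt_succ k).le (levelStart_succ_le hW k)
    have := hb_ge k
    rw [hb_succ]
    omega
  · refine ⟨g p, ?_, ?_, hcol p⟩ <;> rw [apply_eq_apply_levelStart hmono hkp hpk]
    · exact hb_le k
    · exact hb_succ k ▸ apply_levelStart_lt_succ k
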